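/- arXiv:1310.0530 — 5 statements merged into one kernel-verified Lean document; each statement's English description precedes it below -/
import Mathlib

section
/- (i) For S ∈ R, the upper-triangular lifting matrix υ(S) satisfies σ(υ(S)) = Λ·υ(S)·Λ⁻¹ if and only if σS = z·S (the lifting filter is half-sample symmetric about 1/2). (ii) The lower-triangular lifting matrix λ(S) satisfies σ(λ(S)) = Λ·λ(S)·Λ⁻¹ if and only if σS = z⁻¹·S (half-sample symmetric about −1/2). (iii) If H ∈ SL(2,R) satisfies σH = Λ·H·Λ⁻¹ and 𝐒 is a lifting matrix, then the product 𝐒·H satisfies σ(𝐒·H) = Λ·(𝐒·H)·Λ⁻¹ if and only if 𝐒 satisfies σ𝐒 = Λ·𝐒·Λ⁻¹. -/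
open LaurentPolynomial Matrix

noncomputable section

/-- `R` = the ring `ℝ[z,z⁻¹]` of Laurent polynomials with real coefficients. -/
abbrev R2 := LaurentPolynomial ℝ

/-- 2×2 matrices over `R`. -/
abbrev M2 := Matrix (Fin 2) (Fin 2) R2

/-- `SL(2,R)`. -/
abbrev SL2 := Matrix.SpecialLinearGroup (Fin 2) R2

/-- The ℝ-algebra involution `σ` determined by `σ(z) = z⁻¹`. -/
def σ : R2 ≃ₐ[ℝ] R2 := LaurentPolynomial.invert

/-- Entrywise application of `σ` to a matrix; plays the role of `H(z⁻¹)`. -/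
def mσ (H : M2) : M2 := H.map fun f => σ f

/-- `Λ = diag(1, z⁻¹)`. -/
def Λm : M2 := Matrix.diagonal ![1, T (-1)]

/-- `Λ⁻¹ = diag(1, z)`. -/
def Λim : M2 := Matrix.diagonal ![1, T 1]

/-- `L = diag(1, -1)`. -/
def Lm : M2 := Matrix.diagonal ![1, -1]

/-- `J = [[0,1],[1,0]]`. -/
def Jm : M2 := !![0, 1; 1, 0]

/-- Upper-triangular lifting matrix `υ(S) = [[1,S],[0,1]]`. -/
def umat (S : R2) : M2 := !![1, S; 0, 1]

/-- Lower-triangular lifting matrix `λ(S) = [[1,0],[S,1]]`. -/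
def lmat (S : R2) : M2 := !![1, 0; S, 1]

/-- Unimodular gain-scaling matrix `D_K = diag(1/K, K)`. -/
def DKm (K : ℝ) : M2 := Matrix.diagonal ![C K⁻¹, C K]

/-- Conjugation `γ_K(A) = D_K · A · D_K⁻¹`. -/
def γm (K : ℝ) (A : M2) : M2 := DKm K * A * (DKm K)⁻¹

/-- Substitution `z ↦ z²` on Laurent polynomials. -/
def sub2 : R2 →ₐ[ℝ] R2 :=
  AddMonoidAlgebra.mapDomainAlgHom ℝ ℝ
    (AddMonoidHom.mk' (fun n : ℤ => 2 * n) (by intro a b; ring))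

/-- The scalar filter `H_i(z) = H_{i0}(z²) + z·H_{i1}(z²)` of row `i` of `H`. -/
def scal (H : M2) (i : Fin 2) : R2 := sub2 (H i 0) + T 1 * sub2 (H i 1)

/-- Order of a (nonzero) Laurent polynomial: largest minus smallest exponent
with nonzero coefficient. -/
def lorder (f : R2) : ℤ := f.coeff.support.max.unbotD 0 - f.coeff.support.min.untopD 0

/-- Evaluation of a Laurent polynomial at a (nonzero) real number. -/
def lev (x : ℝ) (f : R2) : ℝ := f.coeff.sum fun n a => a * x ^ n

/-- Combined support (in the exponent variable) of all entries of a matrix. -/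
def msupp (H : M2) : Finset ℤ :=
  Finset.univ.biUnion fun p : Fin 2 × Fin 2 => (H p.1 p.2).coeff.support

/-- Polyphase order of a (nonzero) matrix Laurent polynomial `H = Σ h(n) z⁻ⁿ`:
`d - c` where `[c,d]` is the smallest interval with `h(c) ≠ 0 ≠ h(d)`. -/
def morder (H : M2) : ℤ := (msupp H).max.unbotD 0 - (msupp H).min.untopD 0

/-- The product `S_{N-1} ⋯ S_1 · S_0`. -/
def prodRev {M : Type*} [Monoid M] {N : ℕ} (SS : Fin N → M) : M :=
  ((List.ofFn SS).reverse).prod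

/-- Partial products: `partialE SS B (n+1) = S_n ⋯ S_0 · B` and `partialE SS B 0 = B`. -/
def partialE {M : Type*} [Monoid M] {N : ℕ} (SS : Fin N → M) (B : M) : ℕ → M
  | 0 => B
  | n + 1 => (if h : n < N then SS ⟨n, h⟩ else 1) * partialE SS B n

/-- `A` is an upper-triangular lifting matrix. -/
def IsUpper (A : M2) : Prop := ∃ S : R2, A = umat S

/-- `A` is a lower-triangular lifting matrix. -/
def IsLower (A : M2) : Prop := ∃ S : R2, A = lmat S

/-- Strict alternation of the predicates `up`/`lo` along a cascade: no two
consecutive factors are both upper-triangular or both lower-triangular. -/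
def AlternatingP {α : Type*} (up lo : α → Prop) {N : ℕ} (SS : Fin N → α) : Prop :=
  ∀ (i : ℕ) (h : i + 1 < N),
    ¬(up (SS ⟨i, by omega⟩) ∧ up (SS ⟨i + 1, h⟩)) ∧
    ¬(lo (SS ⟨i, by omega⟩) ∧ lo (SS ⟨i + 1, h⟩))

/-- Strict alternation of triangularity along a cascade of matrices. -/
def Alternating {N : ℕ} (SS : Fin N → M2) : Prop := AlternatingP IsUpper IsLower SS

/-- An irreducible cascade of lifting matrices: every factor is a lifting matrix,
no factor is the identity, and triangularity strictly alternates. -/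
def IrrCascade {N : ℕ} (SS : Fin N → M2) : Prop :=
  (∀ i, (IsUpper (SS i) ∨ IsLower (SS i)) ∧ SS i ≠ 1) ∧ Alternating SS

/-! Conjugation by `Λ` multiplies the off-diagonal entries of a matrix by `z` and `z⁻¹`, which
gives (i) and (ii). For (iii), both `σ` and conjugation by `Λ` are multiplicative, so once `H`
satisfies the condition and is invertible it can be cancelled on the right. -/

theorem map_mul_eq_conj_iff {M : Type*} [Monoid M] (f : M →* M) (u : Mˣ) {s h : M}
    (hh : IsUnit h) (hfh : f h = u * h * ↑u⁻¹) :
    f (s * h) = u * (s * h) * ↑u⁻¹ ↔ f s = u * s * ↑u⁻¹ := by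
  have hconj : (u : M) * (s * h) * ↑u⁻¹ = (u * s * ↑u⁻¹) * (u * h * ↑u⁻¹) := by
    simp only [mul_assoc, Units.inv_mul_cancel_left]
  rw [map_mul, hfh, hconj, (u.isUnit.mul hh |>.mul u⁻¹.isUnit).mul_left_inj]

theorem T_neg_one_mul_T_one : (T (-1) * T 1 : R2) = 1 := by rw [← T_add]; norm_num

theorem T_one_mul_T_neg_one : (T 1 * T (-1) : R2) = 1 := by rw [← T_add]; norm_num

def ΛmUnit : M2ˣ where
  val := Λm
  inv := Λim
  val_inv := by
    rw [Λm, Λim, Matrix.diagonal_mul_diagonal, ← Matrix.diagonal_one]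
    congr 1
    ext i; fin_cases i <;> simp [-T_mul, T_neg_one_mul_T_one]
  inv_val := by
    rw [Λm, Λim, Matrix.diagonal_mul_diagonal, ← Matrix.diagonal_one]
    congr 1
    ext i; fin_cases i <;> simp [-T_mul, T_one_mul_T_neg_one]

theorem Λm_mul_mul_Λim (A : M2) :
    Λm * A * Λim = !![A 0 0, A 0 1 * T 1; T (-1) * A 1 0, A 1 1] := by
  refine Matrix.ext fun i j => ?_
  fin_cases i <;> fin_cases j <;>
    simp [-T_mul, Λm, Λim, Matrix.diagonal_mul, Matrix.mul_diagonal]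
  rw [mul_right_comm, T_neg_one_mul_T_one, one_mul]

theorem mσ_umat_eq_conj_iff (S : R2) :
    mσ (umat S) = Λm * umat S * Λim ↔ σ S = T 1 * S := by
  rw [Λm_mul_mul_Λim, ← Matrix.ext_iff]
  simp [-T_mul, Fin.forall_fin_two, umat, mσ, mul_comm]

theorem mσ_lmat_eq_conj_iff (S : R2) :
    mσ (lmat S) = Λm * lmat S * Λim ↔ σ S = T (-1) * S := by
  rw [Λm_mul_mul_Λim, ← Matrix.ext_iff]
  simp [-T_mul, Fin.forall_fin_two, lmat, mσ, mul_comm]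

/-- cf. Brislawn–Wohlberg, Lemma 8. (i) `υ(S)` satisfies the WS
condition iff `σS = z·S`; (ii) `λ(S)` satisfies it iff `σS = z⁻¹·S`; (iii) if `H`
is a unimodular WS filter bank and `𝐒` is a lifting matrix, then `𝐒·H` is WS iff
`𝐒` is. -/
theorem stmt2 :
    (∀ S : R2, mσ (umat S) = Λm * umat S * Λim ↔ σ S = T 1 * S) ∧
    (∀ S : R2, mσ (lmat S) = Λm * lmat S * Λim ↔ σ S = T (-1) * S) ∧
    (∀ H SS : M2, H.det = 1 → mσ H = Λm * H * Λim →
      (IsUpper SS ∨ IsLower SS) →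
      (mσ (SS * H) = Λm * (SS * H) * Λim ↔ mσ SS = Λm * SS * Λim)) := by
  refine ⟨mσ_umat_eq_conj_iff, mσ_lmat_eq_conj_iff, fun H SS hdet hH _ => ?_⟩
  have hHunit : IsUnit H := by rw [Matrix.isUnit_iff_isUnit_det, hdet]; exact isUnit_one
  exact map_mul_eq_conj_iff (σ : R2 →+* R2).mapMatrix.toMonoidHom ΛmUnit hHunit hH
end
end

section
/- A matrix H ∈ SL(2,R) satisfies σH = Λ·H·Λ⁻¹ if and only if there exist K ∈ ℝ with K ≠ 0, an integer N ≥ 0, and lifting matrices S₀, …, S_{N−1}, each either of the form υ(S) with σS = z·S or of the form λ(S) with σS = z⁻¹·S, such that H = D_K·S_{N−1}⋯S₁·S₀. -/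
open LaurentPolynomial Matrix

noncomputable section

/-!
Entrywise, `mσ H = Λ H Λ⁻¹` says that `H₀₀` and `H₁₁` are symmetric, `σ H₀₁ = z H₀₁` and
`σ H₁₀ = z⁻¹ H₁₀`. The symmetric Laurent polynomials are the polynomials in `w = z + z⁻¹`
(Chebyshev polynomials `Cₙ(w) = zⁿ + z⁻ⁿ`), and the two other classes are `(1 + z⁻¹) ℝ[w]` and
`(1 + z) ℝ[w]`. Since `(1 + z⁻¹)(1 + z) = w + 2`, such an `H` of determinant one is a matrix
`[[A, P], [(X + 2) Q, D]]` of `SL(2, ℝ[X])` written in the variable `w`. The Euclidean algorithm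
in `ℝ[X]` reduces it to a constant diagonal matrix by column operations preserving this shape, and
these are right multiplications by lifting matrices with the required symmetry. Conversely, the
matrices with `mσ H = Λ H Λ⁻¹` form a monoid containing `D_K` and those lifting matrices.
-/

open scoped Polynomial

theorem Submonoid.mem_closure_iff_exists_prodRev {M : Type*} [Monoid M] {s : Set M} {x : M} :
    x ∈ Submonoid.closure s ↔ ∃ (N : ℕ) (SS : Fin N → M), (∀ i, SS i ∈ s) ∧ x = prodRev SS := by
  constructor
  · intro hx
    obtain ⟨l, hl, rfl⟩ := Submonoid.exists_list_of_mem_closure hx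
    refine ⟨l.reverse.length, l.reverse.get,
      fun i => hl _ (List.mem_reverse.1 (List.get_mem _ _)), ?_⟩
    rw [prodRev, List.ofFn_get, List.reverse_reverse]
  · rintro ⟨N, SS, hSS, rfl⟩
    refine Submonoid.list_prod_mem _ fun A hA => Submonoid.subset_closure ?_
    obtain ⟨i, rfl⟩ := List.mem_ofFn.1 (List.mem_reverse.1 hA)
    exact hSS i

lemma injOn_add_inv_Ioi_one : Set.InjOn (fun x : ℝ => x + x⁻¹) (Set.Ioi 1) := by
  intro x (hx : 1 < x) y (hy : 1 < y) hxy
  have hx0 : x ≠ 0 := by positivity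
  have hy0 : y ≠ 0 := by positivity
  have h : (x - y) * (x * y - 1) = 0 := by
    field_simp at hxy
    linear_combination hxy
  rcases mul_eq_zero.1 h with h | h
  · linarith
  · nlinarith

namespace Polynomial

/-- `motive A P Q D` is about the matrix `[[A, P], [c Q, D]]`; `lower` and `upper` are right
multiplication by `[[1, 0], [c s, 1]]` and `[[1, t], [0, 1]]`, the column operations of the
Euclidean algorithm that keep this shape. -/
theorem induction_of_mul_sub_mul_eq_one {k : Type*} [Field k] {c : k[X]} (hc : c.natDegree = 1)
    {motive : k[X] → k[X] → k[X] → k[X] → Prop}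
    (base : ∀ A Q D, A * D = 1 → motive A 0 Q D)
    (lower : ∀ A P Q D s, motive A P Q D → motive (A + c * P * s) P (Q + D * s) D)
    (upper : ∀ A P Q D t, motive A P Q D → motive A (P + A * t) Q (D + c * Q * t))
    {A P Q D : k[X]} (h : A * D - c * P * Q = 1) : motive A P Q D := by
  classical
  induction hn : A.natDegree + P.natDegree + (if P = 0 then 0 else 1)
    using Nat.strong_induction_on generalizing A P Q D with
  | _ n ih =>
  subst hn
  by_cases hP : P = 0
  · subst hP
    exact base A Q D (by simpa using h)
  have hc0 : c ≠ 0 := by rintro rfl; simp at hc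
  by_cases hdeg : P.natDegree < A.natDegree
  · have hcP : c * P ≠ 0 := mul_ne_zero hc0 hP
    set s := A / (c * P)
    set A' := A % (c * P)
    have hA : A' + c * P * s = A := by rw [add_comm]; exact EuclideanDomain.div_add_mod A (c * P)
    have hA'deg : A'.natDegree ≤ P.natDegree := by
      by_cases hA' : A' = 0
      · simp [hA']
      · have := natDegree_lt_natDegree hA' (EuclideanDomain.mod_lt A hcP)
        rw [natDegree_mul hc0 hP, hc] at this
        omega
    have key := lower A' P (Q - D * s) D s
      (ih _ (by simp only [if_neg hP]; omega) (by rw [← hA] at h; linear_combination h) rfl)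
    rwa [hA, sub_add_cancel] at key
  · have hA0 : A ≠ 0 := by
      rintro rfl
      have hu : IsUnit c := IsUnit.of_mul_eq_one (-(P * Q)) (by linear_combination h)
      simp [natDegree_eq_zero_of_isUnit hu] at hc
    set t := P / A
    set P' := P % A
    have hP' : P' + A * t = P := by rw [add_comm]; exact EuclideanDomain.div_add_mod P A
    have hmeas : A.natDegree + P'.natDegree + (if P' = 0 then 0 else 1)
        < A.natDegree + P.natDegree + 1 := by
      by_cases h0 : P' = 0
      · simp [h0]
      · have := natDegree_lt_natDegree h0 (EuclideanDomain.mod_lt P hA0)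
        simp only [if_neg h0]
        omega
    have key := upper A P' Q (D - c * Q * t) t
      (ih _ (by simpa only [if_neg hP] using hmeas) (by rw [← hP'] at h; linear_combination h) rfl)
    rwa [hP', sub_add_cancel] at key

end Polynomial

namespace WS

lemma σ_T (n : ℤ) : σ (T n) = T (-n) := invert_T n

lemma σ_C (r : ℝ) : σ (C r) = C r := invert_C r

lemma σ_σ (f : R2) : σ (σ f) = f := involutive_invert f

lemma T_one_mul_T_neg_one : (T 1 : R2) * T (-1) = 1 := by rw [← T_add]; simp

lemma T_neg_one_mul_T_one : (T (-1) : R2) * T 1 = 1 := by rw [← T_add]; simp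

def w : R2 := T 1 + T (-1)

def u : R2 := 1 + T (-1)

def v : R2 := 1 + T 1

def c : ℝ[X] := Polynomial.X + Polynomial.C 2

def φ : ℝ[X] →ₐ[ℝ] R2 := Polynomial.aeval w

lemma σ_w : σ w = w := by rw [w, map_add, σ_T, σ_T, neg_neg, add_comm]

lemma σ_u : σ u = T 1 * u := by
  rw [u, map_add, map_one, σ_T, neg_neg, mul_add, mul_one, ← T_add]
  norm_num [add_comm]

lemma σ_v : σ v = T (-1) * v := by
  rw [v, map_add, map_one, σ_T, mul_add, mul_one, ← T_add]
  norm_num [add_comm]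

lemma T_neg_one_mul_v : T (-1) * v = u := by
  rw [v, u, mul_add, mul_one, ← T_add]
  norm_num [add_comm]

lemma u_mul_v : u * v = φ c := by
  rw [u, v, φ, c, map_add, Polynomial.aeval_X, Polynomial.aeval_C, w, add_mul, mul_add, mul_add,
    ← T_add, map_ofNat]
  norm_num
  ring

lemma σ_φ (p : ℝ[X]) : σ (φ p) = φ p := by
  rw [φ, ← Polynomial.aeval_algHom_apply, σ_w]

lemma φ_chebyshev_C (n : ℤ) : φ (Polynomial.Chebyshev.C ℝ n) = T n + T (-n) := by
  rw [φ, Polynomial.Chebyshev.aeval_C, ← Polynomial.Chebyshev.C_natAbs,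
    ← Polynomial.dickson_one_one_eq_chebyshev_C, w,
    Polynomial.dickson_one_one_eval_add_inv _ _ (by rw [← T_add]; simp), T_pow, T_pow]
  rcases Int.natAbs_eq n with hn | hn <;> rw [hn] <;> simp [add_comm]

lemma exists_φ_eq_add_σ (f : R2) : ∃ p, φ p = f + σ f := by
  induction f using LaurentPolynomial.induction_on' with
  | add f g hf hg =>
    obtain ⟨p, hp⟩ := hf
    obtain ⟨q, hq⟩ := hg
    exact ⟨p + q, by rw [map_add, hp, hq, map_add]; ring⟩
  | C_mul_T n r =>
    refine ⟨Polynomial.C r * Polynomial.Chebyshev.C ℝ n, ?_⟩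
    rw [map_mul, φ_chebyshev_C, map_mul, σ_C, σ_T, φ, Polynomial.aeval_C,
      LaurentPolynomial.algebraMap_apply]
    simp [mul_add]

lemma exists_φ_eq_of_σ_eq {f : R2} (hf : σ f = f) : ∃ p, φ p = f := by
  obtain ⟨p, hp⟩ := exists_φ_eq_add_σ f
  refine ⟨(2 : ℝ)⁻¹ • p, ?_⟩
  rw [map_smul, hp, hf, ← two_smul ℝ f, smul_smul, inv_mul_cancel₀ two_ne_zero, one_smul]

def evalAt (x : ℝˣ) : R2 →+* ℝ := eval₂ (RingHom.id ℝ) x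

lemma evalAt_φ (x : ℝˣ) (p : ℝ[X]) : evalAt x (φ p) = p.eval ((x : ℝ) + x⁻¹) := by
  have hC : (evalAt x).comp (algebraMap ℝ R2) = RingHom.id ℝ := by
    ext r; simp [evalAt]
  rw [φ, Polynomial.aeval_def, Polynomial.hom_eval₂, hC, ← Polynomial.eval, evalAt, w, map_add,
    eval₂_T, eval₂_T]
  simp

lemma φ_injective : Function.Injective φ := by
  rw [injective_iff_map_eq_zero]
  intro p hp
  refine p.eq_zero_of_infinite_isRoot
    (((Set.Ioi_infinite (1 : ℝ)).image injOn_add_inv_Ioi_one).mono ?_)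
  rintro _ ⟨x, hx : 1 < x, rfl⟩
  have h := evalAt_φ (Units.mk0 x (by positivity)) p
  rw [hp, map_zero] at h
  simpa using h.symm

lemma u_ne_zero : u ≠ 0 := by
  intro h
  have h1 := congrArg (evalAt 1) h
  simp [u, evalAt] at h1

lemma exists_v_mul_φ_eq {f : R2} (hf : σ f = T (-1) * f) : ∃ p, v * φ p = f := by
  obtain ⟨B, hB⟩ := exists_φ_eq_of_σ_eq (f := u * f) (by
    rw [map_mul, σ_u, hf, mul_mul_mul_comm, T_one_mul_T_neg_one, one_mul])
  -- `u` vanishes at `z = -1`, where `w = -2`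
  have hroot : B.IsRoot (-2) := by
    have h := congrArg (evalAt (-1)) hB
    rw [evalAt_φ, map_mul] at h
    norm_num [u, evalAt] at h
    exact h
  obtain ⟨P, rfl⟩ := Polynomial.dvd_iff_isRoot.2 hroot
  refine ⟨P, mul_left_cancel₀ u_ne_zero ?_⟩
  rw [← hB, map_mul, ← mul_assoc, u_mul_v, c, map_neg, sub_neg_eq_add]

lemma exists_u_mul_φ_eq {f : R2} (hf : σ f = T 1 * f) : ∃ p, u * φ p = f := by
  obtain ⟨p, hp⟩ := exists_v_mul_φ_eq (f := σ f) (by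
    rw [σ_σ, hf, ← mul_assoc, ← T_add]; simp)
  refine ⟨p, ?_⟩
  rw [← σ_φ p, ← T_neg_one_mul_v, ← σ_v, ← map_mul, hp, σ_σ]

lemma Λm_mul_Λim : Λm * Λim = 1 := by
  rw [Λm, Λim, diagonal_mul_diagonal, ← diagonal_one]
  congr 1
  funext i; fin_cases i
  · exact mul_one 1
  · exact T_neg_one_mul_T_one

lemma Λim_mul_Λm : Λim * Λm = 1 := by
  rw [Λm, Λim, diagonal_mul_diagonal, ← diagonal_one]
  congr 1
  funext i; fin_cases i
  · exact mul_one 1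
  · exact T_one_mul_T_neg_one

lemma mσ_mul (A B : M2) : mσ (A * B) = mσ A * mσ B := Matrix.map_mul (f := (σ : R2 →+* R2))

lemma mσ_one : mσ 1 = 1 := Matrix.map_one _ (map_zero σ) (map_one σ)

def symSubmonoid : Submonoid M2 where
  carrier := {H | mσ H = Λm * H * Λim}
  one_mem' := by
    change mσ 1 = _
    rw [mσ_one, mul_one, Λm_mul_Λim]
  mul_mem' := by
    intro A B (hA : mσ A = _) (hB : mσ B = _)
    change mσ (A * B) = _
    rw [mσ_mul, hA, hB]
    calc Λm * A * Λim * (Λm * B * Λim) = Λm * A * (Λim * Λm) * B * Λim := by noncomm_ring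
      _ = Λm * (A * B) * Λim := by rw [Λim_mul_Λm, mul_one, mul_assoc Λm]

lemma mem_symSubmonoid_iff {H : M2} :
    H ∈ symSubmonoid ↔ σ (H 0 0) = H 0 0 ∧ σ (H 0 1) = T 1 * H 0 1 ∧
      σ (H 1 0) = T (-1) * H 1 0 ∧ σ (H 1 1) = H 1 1 := by
  change mσ H = _ ↔ _
  rw [← Matrix.ext_iff, Fin.forall_fin_two, Fin.forall_fin_two, Fin.forall_fin_two]
  simp only [mσ, Λm, Λim, Matrix.map_apply, diagonal_mul, mul_diagonal, Matrix.cons_val_zero,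
    Matrix.cons_val_one, one_mul, mul_one, mul_right_comm _ _ (T 1), T_neg_one_mul_T_one,
    mul_comm (H 0 1), and_assoc]

def liftSet : Set M2 :=
  {A | (∃ S : R2, A = umat S ∧ σ S = T 1 * S) ∨ (∃ S : R2, A = lmat S ∧ σ S = T (-1) * S)}

lemma liftSet_subset : liftSet ⊆ symSubmonoid := by
  rintro _ (⟨S, rfl, hS⟩ | ⟨S, rfl, hS⟩) <;> simp [mem_symSubmonoid_iff, umat, lmat, hS]

lemma DKm_mem (K : ℝ) : DKm K ∈ symSubmonoid := by
  simp [mem_symSubmonoid_iff, DKm, σ_C]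

lemma φ_C (r : ℝ) : φ (Polynomial.C r) = C r := Polynomial.aeval_C w r

def ofPoly (A P Q D : ℝ[X]) : M2 := !![φ A, u * φ P; v * φ Q, φ D]

lemma exists_eq_ofPoly {H : M2} (hH : H ∈ symSubmonoid) : ∃ A P Q D, H = ofPoly A P Q D := by
  obtain ⟨h00, h01, h10, h11⟩ := mem_symSubmonoid_iff.1 hH
  obtain ⟨A, hA⟩ := exists_φ_eq_of_σ_eq h00
  obtain ⟨P, hP⟩ := exists_u_mul_φ_eq h01
  obtain ⟨Q, hQ⟩ := exists_v_mul_φ_eq h10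
  obtain ⟨D, hD⟩ := exists_φ_eq_of_σ_eq h11
  exact ⟨A, P, Q, D, by rw [ofPoly, hA, hP, hQ, hD, ← Matrix.eta_fin_two H]⟩

lemma det_ofPoly (A P Q D : ℝ[X]) : (ofPoly A P Q D).det = φ (A * D - c * P * Q) := by
  rw [ofPoly, det_fin_two_of, map_sub, map_mul, map_mul, map_mul, ← u_mul_v]
  ring

lemma ofPoly_mul_umat (A P Q D t : ℝ[X]) :
    ofPoly A P Q D * umat (u * φ t) = ofPoly A (P + A * t) Q (D + c * Q * t) := by
  simp only [ofPoly, umat, mul_fin_two, map_add, map_mul, ← u_mul_v]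
  ext i j : 1; fin_cases i <;> fin_cases j <;> dsimp <;> ring

lemma ofPoly_mul_lmat (A P Q D s : ℝ[X]) :
    ofPoly A P Q D * lmat (v * φ s) = ofPoly (A + c * P * s) P (Q + D * s) D := by
  simp only [ofPoly, lmat, mul_fin_two, map_add, map_mul, ← u_mul_v]
  ext i j : 1; fin_cases i <;> fin_cases j <;> dsimp <;> ring

lemma ofPoly_C_zero_C_inv {α : ℝ} (hα : α ≠ 0) (Q : ℝ[X]) :
    ofPoly (Polynomial.C α) 0 Q (Polynomial.C α⁻¹) =
      DKm α⁻¹ * lmat (v * φ (Polynomial.C α * Q)) := by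
  have hC : (C α⁻¹ : R2) * C α = 1 := by rw [← map_mul, inv_mul_cancel₀ hα, map_one]
  simp only [ofPoly, DKm, lmat, diagonal_fin_two, mul_fin_two, map_mul, map_zero, φ_C, inv_inv]
  ext i j : 1; fin_cases i <;> fin_cases j
  · simp
  · simp
  · dsimp; linear_combination (-(v * φ Q)) * hC
  · simp

def IsSymCascade (H : M2) : Prop :=
  ∃ K : ℝ, K ≠ 0 ∧ ∃ M ∈ Submonoid.closure liftSet, H = DKm K * M

lemma IsSymCascade.mul {H A : M2} (hH : IsSymCascade H) (hA : A ∈ liftSet) :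
    IsSymCascade (H * A) := by
  obtain ⟨K, hK, M, hM, rfl⟩ := hH
  exact ⟨K, hK, M * A, mul_mem hM (Submonoid.subset_closure hA), mul_assoc _ _ _⟩

lemma umat_mem_liftSet (t : ℝ[X]) : umat (u * φ t) ∈ liftSet :=
  Or.inl ⟨_, rfl, by rw [map_mul, σ_u, σ_φ, mul_assoc]⟩

lemma lmat_mem_liftSet (s : ℝ[X]) : lmat (v * φ s) ∈ liftSet :=
  Or.inr ⟨_, rfl, by rw [map_mul, σ_v, σ_φ, mul_assoc]⟩

lemma natDegree_c : c.natDegree = 1 := Polynomial.natDegree_X_add_C 2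

lemma isSymCascade_ofPoly {A P Q D : ℝ[X]} (h : A * D - c * P * Q = 1) :
    IsSymCascade (ofPoly A P Q D) := by
  refine Polynomial.induction_of_mul_sub_mul_eq_one natDegree_c
    (motive := fun A P Q D => IsSymCascade (ofPoly A P Q D)) ?_ ?_ ?_ h
  · intro A Q D hAD
    obtain ⟨α, hα, rfl⟩ := Polynomial.isUnit_iff.1 (IsUnit.of_mul_eq_one D hAD)
    obtain rfl : D = Polynomial.C α⁻¹ := by
      rw [← one_mul D, ← Polynomial.C_1, ← inv_mul_cancel₀ hα.ne_zero, Polynomial.C_mul,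
        mul_assoc, hAD, mul_one]
    rw [ofPoly_C_zero_C_inv hα.ne_zero]
    exact IsSymCascade.mul ⟨α⁻¹, inv_ne_zero hα.ne_zero, 1, one_mem _, (mul_one _).symm⟩
      (lmat_mem_liftSet _)
  · intro A P Q D s hH
    rw [← ofPoly_mul_lmat]
    exact hH.mul (lmat_mem_liftSet s)
  · intro A P Q D t hH
    rw [← ofPoly_mul_umat]
    exact hH.mul (umat_mem_liftSet t)

end WS

/-- cf. Brislawn–Wohlberg, Theorem 9.  A unimodular filter bank
is delay-minimized WS iff it factors as `D_K · S_{N-1} ⋯ S₀` into lifting matrices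
with half-sample symmetric lifting filters. -/
theorem stmt3 (H : M2) (hdet : H.det = 1) :
    mσ H = Λm * H * Λim ↔
      ∃ K : ℝ, K ≠ 0 ∧ ∃ (N : ℕ) (SS : Fin N → M2),
        (∀ i, (∃ S : R2, SS i = umat S ∧ σ S = T 1 * S) ∨
              (∃ S : R2, SS i = lmat S ∧ σ S = T (-1) * S)) ∧
        H = DKm K * prodRev SS := by
  constructor
  · intro hH
    obtain ⟨A, P, Q, D, rfl⟩ := WS.exists_eq_ofPoly hH
    have hdet' : A * D - WS.c * P * Q = 1 := WS.φ_injective (by rw [← WS.det_ofPoly, hdet, map_one])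
    obtain ⟨K, hK, M, hM, hKM⟩ := WS.isSymCascade_ofPoly hdet'
    obtain ⟨N, SS, hSS, rfl⟩ := Submonoid.mem_closure_iff_exists_prodRev.1 hM
    exact ⟨K, hK, N, SS, hSS, hKM⟩
  · rintro ⟨K, -, N, SS, hSS, rfl⟩
    have hM : prodRev SS ∈ Submonoid.closure WS.liftSet :=
      Submonoid.mem_closure_iff_exists_prodRev.2 ⟨N, SS, hSS, rfl⟩
    exact WS.symSubmonoid.mul_mem (WS.DKm_mem K) (Submonoid.closure_le.2 WS.liftSet_subset hM)
end
end

section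
/- Let H ∈ 𝔥 (so σH = L·H·J and det H = 1), and let 𝐒 be a lifting matrix, 𝐒 = υ(S) or 𝐒 = λ(S) for some S ∈ R. If the right-lifted matrix F := H·𝐒 also satisfies σF = L·F·J, then S = 0, i.e., 𝐒 = I and F = H. -/
open LaurentPolynomial Matrix

noncomputable section

/-!
Since `σ` is a ring homomorphism, `σ(H·𝐒) = σH·σ𝐒`, so the two HS conditions give
`L·H·J·σ𝐒 = L·H·𝐒·J`. As `L·H` is invertible this forces `J·σ𝐒 = 𝐒·J`, and comparing the
`(0,0)` entries of both sides gives `0 = S` for `𝐒 = υ(S)` and `σS = 0` for `𝐒 = λ(S)`.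
-/

theorem mσ_mul (A B : M2) : mσ (A * B) = mσ A * mσ B :=
  Matrix.map_mul (f := (σ : R2 →+* R2))

theorem det_Lm : Lm.det = -1 := by
  simp [Lm, Matrix.det_diagonal, Fin.prod_univ_two]

theorem isUnit_Lm_mul {H : M2} (h : IsUnit H.det) : IsUnit (Lm * H) := by
  rw [Matrix.isUnit_iff_isUnit_det, Matrix.det_mul, det_Lm]
  exact isUnit_one.neg.mul h

theorem Jm_mul_mσ_eq_of_mσ_mul_eq {H A : M2} (hdet : IsUnit H.det)
    (hH : mσ H = Lm * H * Jm) (hF : mσ (H * A) = Lm * (H * A) * Jm) :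
    Jm * mσ A = A * Jm := by
  apply (isUnit_Lm_mul hdet).mul_left_cancel
  calc Lm * H * (Jm * mσ A) = mσ H * mσ A := by rw [hH, mul_assoc (Lm * H)]
    _ = Lm * H * (A * Jm) := by rw [← mσ_mul, hF]; simp only [mul_assoc]

theorem eq_zero_of_Jm_mul_mσ_umat {S : R2} (h : Jm * mσ (umat S) = umat S * Jm) : S = 0 := by
  simpa [Jm, umat, mσ, Matrix.mul_apply, Fin.sum_univ_two, eq_comm] using
    congrFun (congrFun h 0) 0

theorem eq_zero_of_Jm_mul_mσ_lmat {S : R2} (h : Jm * mσ (lmat S) = lmat S * Jm) : S = 0 := by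
  have hσ : σ S = 0 := by
    simpa [Jm, lmat, mσ, Matrix.mul_apply, Fin.sum_univ_two] using congrFun (congrFun h 0) 0
  simpa using congrArg σ.symm hσ

theorem umat_zero : umat 0 = 1 := by
  simp [umat, Matrix.one_fin_two]

theorem lmat_zero : lmat 0 = 1 := by
  simp [lmat, Matrix.one_fin_two]

/-- cf. Brislawn–Wohlberg, Theorem 12; no nontrivial right lifts
of HS filter banks.  If `H ∈ 𝔥` and `F = H·𝐒` also satisfies the HS condition
for a lifting matrix `𝐒`, then `S = 0`, `𝐒 = I` and `F = H`. -/
theorem stmt4 (H : M2) (S : R2) (SS : M2)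
    (hdet : H.det = 1) (hH : mσ H = Lm * H * Jm)
    (hS : SS = umat S ∨ SS = lmat S)
    (hF : mσ (H * SS) = Lm * (H * SS) * Jm) :
    S = 0 ∧ SS = 1 ∧ H * SS = H := by
  have hlift : Jm * mσ SS = SS * Jm :=
    Jm_mul_mσ_eq_of_mσ_mul_eq (hdet ▸ isUnit_one) hH hF
  have hS0 : S = 0 := by
    rcases hS with rfl | rfl
    · exact eq_zero_of_Jm_mul_mσ_umat hlift
    · exact eq_zero_of_Jm_mul_mσ_lmat hlift
  subst hS0
  have hSS : SS = 1 := by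
    rcases hS with rfl | rfl
    · exact umat_zero
    · exact lmat_zero
  exact ⟨rfl, hSS, by rw [hSS, mul_one]⟩
end
end

section
/- Let 𝔖 = (𝒟, 𝒰, ℒ, 𝔅) be a group lifting structure satisfying: (1) for every B ∈ 𝔅, the polyphase support intervals of its two rows coincide, suppint(b₀) = suppint(b₁); and (2) for every B ∈ 𝔅 and every irreducible cascade S_{N−1}⋯S₀ over 𝒰 ∪ ℒ, the partial products E⁽ⁿ⁾ := S_n⋯S₀·B satisfy the proper inclusion suppint(e⁽ⁿ⁾_{1−m_n}) ⊊ suppint(e⁽ⁿ⁾_{m_n}) for all 0 ≤ n < N, where e⁽ⁿ⁾_i denotes row i of E⁽ⁿ⁾ and m_n is the update characteristic of S_n (m_n = 0 if S_n is upper-triangular, m_n = 1 if lower-triangular). Then 𝔖 is strictly polyphase order-increasing. -/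
open LaurentPolynomial Matrix

noncomputable section

/-- Combined support (in the exponent variable) of a row vector over `R`. -/
def rsupp (e : Fin 2 → R2) : Finset ℤ := (e 0).coeff.support ∪ (e 1).coeff.support

/-- Polyphase support interval of a (nonzero) row vector `𝒆 = Σ 𝒆(n) z⁻ⁿ`:
the smallest interval of integers `n` containing all `n` with `𝒆(n) ≠ 0`. -/
def rsuppint (e : Fin 2 → R2) : Set ℤ :=
  Set.Icc (-((rsupp e).max.unbotD 0)) (-((rsupp e).min.untopD 0))

/-- Row `i` of a matrix. -/
def mrow (H : M2) (i : Fin 2) : Fin 2 → R2 := fun j => H i j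

/-- A group lifting structure: additive groups `P₀`, `P₁` of lifting filters
(giving the lifting matrix groups `𝒰 = υ(P₀)` and `ℒ = λ(P₁)`), the full
gain-scaling group `𝒟`, and a set `𝔅 ⊆ SL(2,R)` of base filter banks. -/
structure GLS where
  P0 : AddSubgroup R2
  P1 : AddSubgroup R2
  Bset : Set M2
  hB : ∀ B ∈ Bset, Matrix.det B = 1

/-- The upper-triangular lifting matrix group `𝒰 = υ(P₀)`. -/
def GLS.Uset (G : GLS) : Set M2 := umat '' (G.P0 : Set R2)

/-- The lower-triangular lifting matrix group `ℒ = λ(P₁)`. -/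
def GLS.Lset (G : GLS) : Set M2 := lmat '' (G.P1 : Set R2)

/-- `𝒟`-invariance: every `γ_K` (`K ≠ 0`) fixes `𝒰` and `ℒ`. -/
def GLS.DInv (G : GLS) : Prop :=
  ∀ K : ℝ, K ≠ 0 → γm K '' G.Uset = G.Uset ∧ γm K '' G.Lset = G.Lset

/-- An irreducible cascade over `𝒰 ∪ ℒ`. -/
def GLS.IrrCas (G : GLS) {N : ℕ} (SS : Fin N → M2) : Prop :=
  (∀ i, SS i ∈ G.Uset ∪ G.Lset ∧ SS i ≠ 1) ∧ Alternating SS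

/-- The strictly polyphase order-increasing property: along every irreducible
cascade applied to every base filter bank, the polyphase order of the partial
products strictly increases. -/
def GLS.OrderInc (G : GLS) : Prop :=
  ∀ B ∈ G.Bset, ∀ (N : ℕ) (SS : Fin N → M2), G.IrrCas SS →
    ∀ n < N, morder (partialE SS B (n + 1)) > morder (partialE SS B n)


/-!
The polyphase order of `E` is the length of the hull of the supports of its two rows, both
nonzero since every partial product has determinant `1`. By
hypothesis (2) the updated row of a partial product has the larger support interval, so the order
of `S_n ⋯ S_0 B` is the length of its updated row `m_n`. Its other row is unchanged from
`S_{n-1} ⋯ S_0 B`, whose updated row was precisely that row `1 - m_n` (by alternation; for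
`n = 0` hypothesis (1) plays this role), so the old order is the length of row `1 - m_n`, which
(2) makes strictly shorter than row `m_n`.
-/

section SupportInterval

variable {e f : Fin 2 → R2}

-- Endpoints of `rsupp e`; `rsuppint e` is `[-rowHi e, -rowLo e]`, as it indexes by powers of `z⁻¹`.
def rowLo (e : Fin 2 → R2) : ℤ := (rsupp e).min.untopD 0

def rowHi (e : Fin 2 → R2) : ℤ := (rsupp e).max.unbotD 0

def rowWidth (e : Fin 2 → R2) : ℤ := rowHi e - rowLo e

lemma rsuppint_eq_Icc (e : Fin 2 → R2) : rsuppint e = Set.Icc (-rowHi e) (-rowLo e) := rfl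

lemma rowLo_eq_min' (he : (rsupp e).Nonempty) : rowLo e = (rsupp e).min' he := by
  rw [rowLo, ← Finset.coe_min' he]; rfl

lemma rowHi_eq_max' (he : (rsupp e).Nonempty) : rowHi e = (rsupp e).max' he := by
  rw [rowHi, ← Finset.coe_max' he]; rfl

lemma rowLo_le_rowHi (he : (rsupp e).Nonempty) : rowLo e ≤ rowHi e := by
  rw [rowLo_eq_min' he, rowHi_eq_max' he]
  exact Finset.min'_le_max' _ he

lemma rsuppint_subset_iff (he : (rsupp e).Nonempty) :
    rsuppint e ⊆ rsuppint f ↔ rowHi e ≤ rowHi f ∧ rowLo f ≤ rowLo e := by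
  rw [rsuppint_eq_Icc, rsuppint_eq_Icc, Set.Icc_subset_Icc_iff (neg_le_neg (rowLo_le_rowHi he))]
  exact and_congr neg_le_neg_iff neg_le_neg_iff

lemma rowWidth_lt_of_rsuppint_ssubset (he : (rsupp e).Nonempty)
    (h : rsuppint e ⊂ rsuppint f) : rowWidth e < rowWidth f := by
  obtain ⟨hhi, hlo⟩ := (rsuppint_subset_iff he).mp h.subset
  refine lt_of_le_of_ne (by unfold rowWidth; omega) fun hw => h.ne ?_
  unfold rowWidth at hw
  rw [rsuppint_eq_Icc, rsuppint_eq_Icc, show rowHi e = rowHi f by omega,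
    show rowLo e = rowLo f by omega]

lemma rsupp_nonempty_of_ne_zero (he : e ≠ 0) : (rsupp e).Nonempty := by
  rw [Finset.nonempty_iff_ne_empty, rsupp, Ne, Finset.union_eq_empty, Finsupp.support_eq_empty,
    Finsupp.support_eq_empty, AddMonoidAlgebra.coeff_eq_zero, AddMonoidAlgebra.coeff_eq_zero]
  exact fun h => he (funext fun j => by fin_cases j <;> simp [h.1, h.2])

end SupportInterval

section PolyphaseOrder

variable {H : M2}

lemma mrow_ne_zero_of_det_eq_one (hH : H.det = 1) (i : Fin 2) : mrow H i ≠ 0 := fun h =>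
  one_ne_zero (hH.symm.trans (Matrix.det_eq_zero_of_row_eq_zero i (congrFun h)))

lemma msupp_eq_union (H : M2) : msupp H = rsupp (mrow H 0) ∪ rsupp (mrow H 1) := by
  ext n
  simp only [msupp, rsupp, mrow, Finset.mem_biUnion, Finset.mem_univ, true_and,
    Finset.mem_union, Prod.exists, Fin.exists_fin_two]

lemma morder_eq_max_sub_min (hH : H.det = 1) :
    morder H = max (rowHi (mrow H 0)) (rowHi (mrow H 1)) -
      min (rowLo (mrow H 0)) (rowLo (mrow H 1)) := by
  have h0 := rsupp_nonempty_of_ne_zero (mrow_ne_zero_of_det_eq_one hH 0)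
  have h1 := rsupp_nonempty_of_ne_zero (mrow_ne_zero_of_det_eq_one hH 1)
  rw [morder, msupp_eq_union, Finset.max_union, Finset.min_union, rowHi_eq_max' h0,
    rowHi_eq_max' h1, rowLo_eq_min' h0, rowLo_eq_min' h1, ← Finset.coe_max' h0,
    ← Finset.coe_max' h1, ← Finset.coe_min' h0, ← Finset.coe_min' h1]
  rfl

lemma morder_eq_rowWidth_of_rsuppint_subset (hH : H.det = 1) {i j : Fin 2} (hij : i ≠ j)
    (h : rsuppint (mrow H i) ⊆ rsuppint (mrow H j)) : morder H = rowWidth (mrow H j) := by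
  obtain ⟨hhi, hlo⟩ := (rsuppint_subset_iff
    (rsupp_nonempty_of_ne_zero (mrow_ne_zero_of_det_eq_one hH i))).mp h
  rw [morder_eq_max_sub_min hH, rowWidth]
  fin_cases i <;> fin_cases j <;> simp_all

end PolyphaseOrder

section Cascade

/-- `A` is a lifting matrix with update characteristic `m`. -/
def UpdatesRow (A : M2) (m : Fin 2) : Prop := ![IsUpper A, IsLower A] m

lemma exists_updatesRow {G : GLS} {A : M2} (hA : A ∈ G.Uset ∪ G.Lset) :
    ∃ m, UpdatesRow A m := by
  rcases hA with ⟨S, -, rfl⟩ | ⟨S, -, rfl⟩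
  exacts [⟨0, S, rfl⟩, ⟨1, S, rfl⟩]

lemma det_eq_one_of_updatesRow {A : M2} {m : Fin 2} (hA : UpdatesRow A m) : A.det = 1 := by
  fin_cases m <;> obtain ⟨S, rfl⟩ := hA <;> simp [umat, lmat, Matrix.det_fin_two_of]

lemma mrow_mul_of_updatesRow {A : M2} {m : Fin 2} (hA : UpdatesRow A m) (E : M2) :
    mrow (A * E) (1 - m) = mrow E (1 - m) := by
  fin_cases m <;> obtain ⟨S, rfl⟩ := hA <;> funext j <;>
    simp [mrow, umat, lmat, Matrix.mul_apply, Fin.sum_univ_two]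

lemma GLS.IrrCas.updatesRow_pred {G : GLS} {N : ℕ} {SS : Fin N → M2} (hSS : G.IrrCas SS)
    {k : ℕ} (hk : k + 1 < N) {m : Fin 2} (hm : UpdatesRow (SS ⟨k + 1, hk⟩) m) :
    UpdatesRow (SS ⟨k, by omega⟩) (1 - m) := by
  obtain ⟨m', hm'⟩ := exists_updatesRow (hSS.1 ⟨k, by omega⟩).1
  have halt := hSS.2 k hk
  fin_cases m <;> fin_cases m'
  exacts [absurd ⟨hm', hm⟩ halt.1, hm', hm', absurd ⟨hm', hm⟩ halt.2]

lemma partialE_succ {M : Type*} [Monoid M] {N : ℕ} (SS : Fin N → M) (B : M) {n : ℕ}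
    (hn : n < N) : partialE SS B (n + 1) = SS ⟨n, hn⟩ * partialE SS B n := by
  rw [partialE, dif_pos hn]

lemma det_partialE {N : ℕ} {SS : Fin N → M2} {B : M2} (hSS : ∀ i, (SS i).det = 1)
    (hB : B.det = 1) (n : ℕ) : (partialE SS B n).det = 1 := by
  induction n with
  | zero => exact hB
  | succ n ih =>
    rw [partialE, Matrix.det_mul, ih, mul_one]
    split
    exacts [hSS _, Matrix.det_one]

end Cascade

/-- cf. Brislawn, GLS-II, Lemma 2.  If in a group lifting
structure (1) every base filter bank has equal polyphase support intervals in its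
two rows, and (2) along every irreducible cascade the support interval of the
unmodified row of each partial product is properly contained in that of the
updated row, then the structure is strictly polyphase order-increasing. -/
theorem stmt10 (G : GLS)
    (h1 : ∀ B ∈ G.Bset, rsuppint (mrow B 0) = rsuppint (mrow B 1))
    (h2 : ∀ B ∈ G.Bset, ∀ (N : ℕ) (SS : Fin N → M2), G.IrrCas SS →
      ∀ (n : ℕ) (hn : n < N),
        (IsUpper (SS ⟨n, hn⟩) →
          rsuppint (mrow (partialE SS B (n + 1)) 1) ⊂
            rsuppint (mrow (partialE SS B (n + 1)) 0)) ∧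
        (IsLower (SS ⟨n, hn⟩) →
          rsuppint (mrow (partialE SS B (n + 1)) 0) ⊂
            rsuppint (mrow (partialE SS B (n + 1)) 1))) :
    G.OrderInc := by
  intro B hB N SS hSS n hn
  set E := partialE SS B
  have hdet : ∀ k, (E k).det = 1 := det_partialE (fun i =>
    det_eq_one_of_updatesRow (exists_updatesRow (hSS.1 i).1).choose_spec) (G.hB B hB)
  have hupd {k : ℕ} (hk : k < N) {m : Fin 2} (hm : UpdatesRow (SS ⟨k, hk⟩) m) :
      rsuppint (mrow (E (k + 1)) (1 - m)) ⊂ rsuppint (mrow (E (k + 1)) m) := by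
    fin_cases m
    exacts [(h2 B hB N SS hSS k hk).1 hm, (h2 B hB N SS hSS k hk).2 hm]
  obtain ⟨m, hm⟩ := exists_updatesRow (hSS.1 ⟨n, hn⟩).1
  have hprev : rsuppint (mrow (E n) m) ⊆ rsuppint (mrow (E n) (1 - m)) := by
    cases n with
    | zero => fin_cases m <;> simp [E, partialE, h1 B hB]
    | succ k => simpa using (hupd (by omega) (hSS.updatesRow_pred hn hm)).subset
  have hne : 1 - m ≠ m := by fin_cases m <;> decide
  calc morder (E n) = rowWidth (mrow (E n) (1 - m)) :=
        morder_eq_rowWidth_of_rsuppint_subset (hdet n) hne.symm hprev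
    _ = rowWidth (mrow (E (n + 1)) (1 - m)) := by
        rw [show E (n + 1) = _ from partialE_succ SS B hn, mrow_mul_of_updatesRow hm]
    _ < rowWidth (mrow (E (n + 1)) m) :=
        rowWidth_lt_of_rsuppint_ssubset
          (rsupp_nonempty_of_ne_zero (mrow_ne_zero_of_det_eq_one (hdet _) _)) (hupd hn hm)
    _ = morder (E (n + 1)) :=
        (morder_eq_rowWidth_of_rsuppint_subset (hdet _) hne (hupd hn hm).subset).symm
end
end

section
/- Let S_{N−1}⋯S₀ be an irreducible cascade of WS lifting matrices (each S_n is either υ(s_n) with σs_n = z·s_n or λ(s_n) with σs_n = z⁻¹·s_n, s_n ≠ 0, with triangularity strictly alternating), set E⁽ⁿ⁾ := S_n⋯S₀, and let E⁽ⁿ⁾_i(z) := E⁽ⁿ⁾_{i0}(z²) + z·E⁽ⁿ⁾_{i1}(z²) (i = 0, 1) be the intermediate scalar filters. Let m_n be the update characteristic of S_n (0 if upper-triangular, 1 if lower-triangular), let t⁽ⁿ⁾ be the support radius of s_n (so t⁽ⁿ⁾ ≥ 1), and let r⁽ⁿ⁾_i be the support radius of E⁽ⁿ⁾_i. Then suppint(E⁽ⁿ⁾_i)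 = [−r⁽ⁿ⁾_i − i, r⁽ⁿ⁾_i − i] for i = 0, 1 (so E⁽ⁿ⁾_i has support interval centered at −i), and the radii satisfy r⁽ⁿ⁾_{m_n} = r⁽ⁿ⁾_{1−m_n} + 2t⁽ⁿ⁾ − 1 for n ≥ 0, r⁽ⁿ⁾_{1−m_n} = r⁽ⁿ⁻¹⁾_{m_n} + 2t⁽ⁿ⁻¹⁾ − 1 for n ≥ 1, and r⁽⁰⁾_{1−m₀} = 0. -/
open LaurentPolynomial Matrix

noncomputable section

/-- Support interval `[a,b]` of a (nonzero) scalar filter `F = Σ f(n) z⁻ⁿ`,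
as a set of the indices `n`. -/
def sint (f : R2) : Set ℤ :=
  Set.Icc (-(f.coeff.support.max.unbotD 0)) (-(f.coeff.support.min.untopD 0))

/-- Support radius `⌊(b - a + 1)/2⌋` of a (nonzero) scalar filter with
support interval `[a,b]`. -/
def srad (f : R2) : ℤ :=
  ((-(f.coeff.support.min.untopD 0)) - (-(f.coeff.support.max.unbotD 0)) + 1) / 2

/-!
Row `i` of the scalar filters of `E⁽ⁿ⁾` stays symmetric, `F(z⁻¹) = z⁻²ⁱ F(z)`, so its support
interval is determined by its top exponent alone. A lifting step replaces the updated row `A` by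
`A + s(z²) B`, where `B` is the other row. Since `B` is the wider row (it was updated at the
previous step, and at `n = 0` both rows have radius `0`), the top exponent of `s(z²) B` exceeds
that of `A`, so it is the top exponent of the new row, whose radius is thus `r_B + 2t - 1`.
-/

def maxExp (f : R2) : ℤ := f.coeff.support.max.unbotD 0

def minExp (f : R2) : ℤ := f.coeff.support.min.untopD 0

section Exponents

variable {f g : R2} {n : ℤ}

lemma support_nonempty_of_ne_zero (hf : f ≠ 0) : f.coeff.support.Nonempty :=
  Finsupp.support_nonempty_iff.mpr (mt AddMonoidAlgebra.coeff_eq_zero.mp hf)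

lemma le_maxExp (hn : f.coeff n ≠ 0) : n ≤ maxExp f := by
  obtain ⟨b, hb⟩ := Finset.max_of_mem (Finsupp.mem_support_iff.mpr hn)
  rw [maxExp, hb]
  exact Finset.le_max_of_eq (Finsupp.mem_support_iff.mpr hn) hb

lemma minExp_le (hn : f.coeff n ≠ 0) : minExp f ≤ n := by
  obtain ⟨b, hb⟩ := Finset.min_of_mem (Finsupp.mem_support_iff.mpr hn)
  rw [minExp, hb]
  exact Finset.min_le_of_eq (Finsupp.mem_support_iff.mpr hn) hb

lemma coeff_maxExp_ne_zero (hf : f ≠ 0) : f.coeff (maxExp f) ≠ 0 := by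
  obtain ⟨b, hb⟩ := Finset.max_of_nonempty (support_nonempty_of_ne_zero hf)
  rw [maxExp, hb]
  exact Finsupp.mem_support_iff.mp (Finset.mem_of_max hb)

lemma coeff_minExp_ne_zero (hf : f ≠ 0) : f.coeff (minExp f) ≠ 0 := by
  obtain ⟨b, hb⟩ := Finset.min_of_nonempty (support_nonempty_of_ne_zero hf)
  rw [minExp, hb]
  exact Finsupp.mem_support_iff.mp (Finset.mem_of_min hb)

lemma minExp_le_maxExp (hf : f ≠ 0) : minExp f ≤ maxExp f :=
  minExp_le (coeff_maxExp_ne_zero hf)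

lemma maxExp_eq_of_coeff {a : ℤ} (ha : f.coeff a ≠ 0) (h : ∀ n, f.coeff n ≠ 0 → n ≤ a) :
    maxExp f = a :=
  le_antisymm (h _ (coeff_maxExp_ne_zero (by rintro rfl; exact ha rfl))) (le_maxExp ha)

lemma maxExp_T (n : ℤ) : maxExp (T n) = n :=
  maxExp_eq_of_coeff (by simp) fun k hk => by simp_all

lemma maxExp_σ (hf : f ≠ 0) : maxExp (σ f) = -minExp f := by
  refine maxExp_eq_of_coeff ?_ fun n hn => ?_
  · simpa [σ] using coeff_minExp_ne_zero hf
  · have := minExp_le (n := -n) (by simpa [σ] using hn)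
    omega

lemma maxExp_mul (hf : f ≠ 0) (hg : g ≠ 0) : maxExp (f * g) = maxExp f + maxExp g := by
  classical
  refine maxExp_eq_of_coeff ?_ fun n hn => ?_
  · have hu : UniqueAdd f.coeff.support g.coeff.support (maxExp f) (maxExp g) := by
      intro a b ha hb hab
      have := le_maxExp (Finsupp.mem_support_iff.mp ha)
      have := le_maxExp (Finsupp.mem_support_iff.mp hb)
      omega
    rw [AddMonoidAlgebra.coeff_mul_add_of_uniqueAdd hu]
    exact mul_ne_zero (coeff_maxExp_ne_zero hf) (coeff_maxExp_ne_zero hg)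
  · obtain ⟨a, ha, b, hb, rfl⟩ := Finset.mem_add.mp
      (AddMonoidAlgebra.support_coeff_mul_subset f g (Finsupp.mem_support_iff.mpr hn))
    have := le_maxExp (Finsupp.mem_support_iff.mp ha)
    have := le_maxExp (Finsupp.mem_support_iff.mp hb)
    omega

lemma add_ne_zero_and_maxExp_add_of_lt (hg : g ≠ 0) (h : maxExp f < maxExp g) :
    f + g ≠ 0 ∧ maxExp (f + g) = maxExp g := by
  have hf : f.coeff (maxExp g) = 0 := by
    by_contra hc
    exact absurd (le_maxExp hc) (not_le.mpr h)
  have hfg : (f + g).coeff (maxExp g) ≠ 0 := by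
    simpa [hf] using coeff_maxExp_ne_zero hg
  refine ⟨by rintro h0; simp [h0] at hfg, maxExp_eq_of_coeff hfg fun n hn => ?_⟩
  by_cases hfn : f.coeff n = 0
  · exact le_maxExp (by simpa [hfn] using hn)
  · exact (le_maxExp hfn).trans h.le

end Exponents

lemma coeff_sub2_two_mul (f : R2) (k : ℤ) : (sub2 f).coeff (2 * k) = f.coeff k := by
  change (Finsupp.mapDomain _ f.coeff) (2 * k) = _
  exact Finsupp.mapDomain_apply (fun a b h => by simpa using h) f.coeff k

lemma support_sub2 (f : R2) :
    (sub2 f).coeff.support = f.coeff.support.image (2 * ·) := by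
  classical
  exact Finsupp.mapDomain_support_of_injective (fun a b h => by simpa using h) f.coeff

lemma sub2_ne_zero {f : R2} (hf : f ≠ 0) : sub2 f ≠ 0 := by
  refine fun h => hf (LaurentPolynomial.ext fun k => ?_)
  simpa [h] using (coeff_sub2_two_mul f k).symm

lemma maxExp_sub2 {f : R2} (hf : f ≠ 0) : maxExp (sub2 f) = 2 * maxExp f := by
  refine maxExp_eq_of_coeff ?_ fun n hn => ?_
  · rw [coeff_sub2_two_mul]; exact coeff_maxExp_ne_zero hf
  · have hn : n ∈ (sub2 f).coeff.support := Finsupp.mem_support_iff.mpr hn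
    rw [support_sub2] at hn
    obtain ⟨a, ha, rfl⟩ := Finset.mem_image.mp hn
    have := le_maxExp (Finsupp.mem_support_iff.mp ha)
    omega

lemma sub2_T (n : ℤ) : sub2 (T n) = T (2 * n) := by
  change AddMonoidAlgebra.mapDomain _ (T n) = _
  rw [LaurentPolynomial.T, AddMonoidAlgebra.mapDomain_single]
  rfl

lemma σ_sub2 (f : R2) : σ (sub2 f) = sub2 (σ f) := by
  have : (σ : R2 →ₐ[ℝ] R2).comp sub2 = sub2.comp (σ : R2 →ₐ[ℝ] R2) :=
    AddMonoidAlgebra.algHom_ext (fun n => by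
      change σ (sub2 (T n)) = sub2 (σ (T n))
      simp [sub2_T, σ]) (Subsingleton.elim _ _)
  exact AlgHom.congr_fun this f

/-- `f(z⁻¹) = z^c f(z)`: the coefficients of `f` are symmetric about the exponent `-c/2`. -/
def IsSymmetric (c : ℤ) (f : R2) : Prop := σ f = T c * f

lemma isSymmetric_one : IsSymmetric 0 1 := by
  simp [IsSymmetric]

lemma isSymmetric_T (n : ℤ) : IsSymmetric (-2 * n) (T n) := by
  rw [IsSymmetric, ← T_add]
  simp only [σ, invert_T]
  ring_nf

namespace IsSymmetric

variable {a b c : ℤ} {f g : R2}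

lemma add (hf : IsSymmetric c f) (hg : IsSymmetric c g) : IsSymmetric c (f + g) := by
  rw [IsSymmetric, map_add, hf, hg, mul_add]

lemma mul (hf : IsSymmetric a f) (hg : IsSymmetric b g) : IsSymmetric (a + b) (f * g) := by
  rw [IsSymmetric, map_mul, hf, hg, T_add]
  ring

lemma sub2 (hf : IsSymmetric c f) : IsSymmetric (2 * c) (sub2 f) := by
  rw [IsSymmetric, σ_sub2, hf, map_mul, sub2_T]

lemma minExp_eq (hf0 : f ≠ 0) (hf : IsSymmetric c f) : minExp f = -(c + maxExp f) := by
  have h := maxExp_σ hf0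
  rw [hf, maxExp_mul (isUnit_T c).ne_zero hf0, maxExp_T] at h
  omega

lemma neg_le_two_mul_maxExp (hf0 : f ≠ 0) (hf : IsSymmetric c f) : -c ≤ 2 * maxExp f := by
  have h := minExp_le_maxExp hf0
  rw [hf.minExp_eq hf0] at h
  omega

lemma srad_eq (hf0 : f ≠ 0) (hf : IsSymmetric c f) : srad f = maxExp f + (c + 1) / 2 := by
  have h := hf.minExp_eq hf0
  change (-minExp f - -maxExp f + 1) / 2 = _
  omega

lemma sint_eq (hf0 : f ≠ 0) (hf : IsSymmetric c f) :
    sint f = Set.Icc (-maxExp f) (c + maxExp f) := by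
  change Set.Icc (-maxExp f) (-minExp f) = _
  rw [hf.minExp_eq hf0, neg_neg]

lemma one_le_srad {j : ℤ} (hf0 : f ≠ 0) (hf : IsSymmetric (1 - 2 * j) f) : 1 ≤ srad f := by
  have h := hf.neg_le_two_mul_maxExp hf0
  rw [hf.srad_eq hf0]
  omega

end IsSymmetric

theorem add_sub2_mul_ne_zero_and_maxExp_eq {A B S : R2} (hB : B ≠ 0) (hS : S ≠ 0)
    (h : maxExp A < 2 * maxExp S + maxExp B) :
    A + sub2 S * B ≠ 0 ∧ maxExp (A + sub2 S * B) = 2 * maxExp S + maxExp B := by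
  have hSB : maxExp (sub2 S * B) = 2 * maxExp S + maxExp B := by
    rw [maxExp_mul (sub2_ne_zero hS) hB, maxExp_sub2 hS]
  rw [← hSB] at h ⊢
  exact add_ne_zero_and_maxExp_add_of_lt (mul_ne_zero (sub2_ne_zero hS) hB) h

lemma fin_two_eq_one_sub_of_ne {i j : Fin 2} (h : i ≠ j) : i = 1 - j := by
  fin_cases i <;> fin_cases j <;> simp_all

lemma fin_two_eq_or_eq_one_sub (i j : Fin 2) : i = j ∨ i = 1 - j := by
  fin_cases i <;> fin_cases j <;> simp

lemma fin_two_cast_one_sub (j : Fin 2) : (((1 - j : Fin 2) : ℕ) : ℤ) = 1 - j := by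
  fin_cases j <;> rfl

def liftMat (j : Fin 2) (S : R2) : M2 := if j = 0 then umat S else lmat S

lemma eq_liftMat_of_cases {j : Fin 2} {S : R2} {L : M2}
    (h : (j = 0 → L = umat S) ∧ (j = 1 → L = lmat S)) : L = liftMat j S := by
  fin_cases j <;> simp_all [liftMat]

lemma isSymmetric_of_cases {j : Fin 2} {S : R2}
    (h : (j = 0 → σ S = T 1 * S) ∧ (j = 1 → σ S = T (-1) * S)) :
    IsSymmetric (1 - 2 * j) S := by
  fin_cases j <;> simp_all [IsSymmetric]

lemma scal_liftMat_mul_self (j : Fin 2) (S : R2) (H : M2) :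
    scal (liftMat j S * H) j = scal H j + sub2 S * scal H (1 - j) := by
  fin_cases j <;> simp [liftMat, umat, lmat, scal, Matrix.mul_apply, Fin.sum_univ_two] <;> ring

lemma scal_liftMat_mul_one_sub (j : Fin 2) (S : R2) (H : M2) :
    scal (liftMat j S * H) (1 - j) = scal H (1 - j) := by
  fin_cases j <;> simp [liftMat, umat, lmat, scal, Matrix.mul_apply, Fin.sum_univ_two]

/-- The support interval of the scalar filter of row `i` is centred at `-i`. -/
def HasWSRows (H : M2) : Prop := ∀ i : Fin 2, scal H i ≠ 0 ∧ IsSymmetric (-2 * i) (scal H i)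

lemma scal_one_zero : scal 1 0 = 1 := by
  simp [scal]

lemma scal_one_one : scal 1 1 = T 1 := by
  simp [scal]

lemma maxExp_scal_one (i : Fin 2) : maxExp (scal 1 i) = i := by
  fin_cases i
  · simpa [scal_one_zero] using maxExp_T 0
  · simpa [scal_one_one] using maxExp_T 1

lemma hasWSRows_one : HasWSRows 1 := by
  intro i
  fin_cases i
  · simpa [scal_one_zero] using isSymmetric_one
  · simpa [scal_one_one] using ⟨(isUnit_T 1).ne_zero, isSymmetric_T 1⟩

namespace HasWSRows

variable {H : M2}

lemma srad_eq (hH : HasWSRows H) (i : Fin 2) : srad (scal H i) = maxExp (scal H i) - i := by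
  rw [(hH i).2.srad_eq (hH i).1]
  omega

lemma sint_eq (hH : HasWSRows H) (i : Fin 2) :
    sint (scal H i) = Set.Icc (-srad (scal H i) - i) (srad (scal H i) - i) := by
  rw [(hH i).2.sint_eq (hH i).1, hH.srad_eq]
  congr 1 <;> ring

theorem liftMat_mul (hH : HasWSRows H) {j : Fin 2} {S : R2} (hS0 : S ≠ 0)
    (hS : IsSymmetric (1 - 2 * j) S) (hle : srad (scal H j) ≤ srad (scal H (1 - j))) :
    HasWSRows (liftMat j S * H) ∧ scal (liftMat j S * H) (1 - j) = scal H (1 - j) ∧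
      srad (scal (liftMat j S * H) j) =
        srad (scal (liftMat j S * H) (1 - j)) + 2 * srad S - 1 := by
  have hj := fin_two_cast_one_sub j
  have hj1 : ((j : ℕ) : ℤ) ≤ 1 := by have := j.isLt; omega
  have htS := hS.srad_eq hS0
  have ht := hS.one_le_srad hS0
  have hA := hH.srad_eq j
  have hB := hH.srad_eq (1 - j)
  obtain ⟨hne, hmax⟩ :=
    add_sub2_mul_ne_zero_and_maxExp_eq (A := scal H j) (hH (1 - j)).1 hS0 (by omega)
  have hsymm : IsSymmetric (-2 * j) (scal H j + sub2 S * scal H (1 - j)) := by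
    have hc : -2 * (j : ℤ) = 2 * (1 - 2 * j) + -2 * ((1 - j : Fin 2) : ℕ) := by
      rw [hj]; ring
    have hBS := hS.sub2.mul (hH (1 - j)).2
    rw [← hc] at hBS
    exact (hH j).2.add hBS
  have hself := scal_liftMat_mul_self j S H
  have hrows : HasWSRows (liftMat j S * H) := by
    intro i
    rcases fin_two_eq_or_eq_one_sub i j with rfl | rfl
    · rw [hself]
      exact ⟨hne, hsymm⟩
    · rw [scal_liftMat_mul_one_sub]
      exact hH _
  refine ⟨hrows, scal_liftMat_mul_one_sub j S H, ?_⟩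
  rw [scal_liftMat_mul_one_sub, hrows.srad_eq, hself, hmax]
  omega

end HasWSRows

section Cascade

variable {N : ℕ} {m : Fin N → Fin 2} {s : Fin N → R2}

def cascadeE (m : Fin N → Fin 2) (s : Fin N → R2) : ℕ → M2 :=
  partialE (fun k => liftMat (m k) (s k)) 1

lemma cascadeE_succ {n : ℕ} (hn : n < N) :
    cascadeE m s (n + 1) = liftMat (m ⟨n, hn⟩) (s ⟨n, hn⟩) * cascadeE m s n := by
  simp [cascadeE, partialE, hn]

/-- The row updated at step `n` was left alone at step `n - 1`, when the other row grew. -/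
theorem hasWSRows_cascadeE_and_srad_le (hs0 : ∀ n, s n ≠ 0)
    (hs : ∀ n, IsSymmetric (1 - 2 * (m n : ℤ)) (s n))
    (halt : ∀ (i : ℕ) (h : i + 1 < N), m ⟨i + 1, h⟩ ≠ m ⟨i, by omega⟩) :
    ∀ n ≤ N, HasWSRows (cascadeE m s n) ∧ ∀ h : n < N,
      srad (scal (cascadeE m s n) (m ⟨n, h⟩)) ≤ srad (scal (cascadeE m s n) (1 - m ⟨n, h⟩))
  | 0, _ => ⟨hasWSRows_one, fun _ => by
      simp only [cascadeE, partialE, hasWSRows_one.srad_eq, maxExp_scal_one, sub_self, le_refl]⟩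
  | n + 1, hn => by
    obtain ⟨hE, hle⟩ := hasWSRows_cascadeE_and_srad_le hs0 hs halt n (by omega)
    obtain ⟨hE', -, hrad⟩ := hE.liftMat_mul (hs0 _) (hs _) (hle hn)
    rw [← cascadeE_succ hn] at hE' hrad
    refine ⟨hE', fun h => ?_⟩
    have ht := (hs ⟨n, hn⟩).one_le_srad (hs0 _)
    rw [fin_two_eq_one_sub_of_ne (halt n h), sub_sub_cancel]
    omega

theorem hasWSRows_cascadeE_succ_and_srad_eq (hs0 : ∀ n, s n ≠ 0)
    (hs : ∀ n, IsSymmetric (1 - 2 * (m n : ℤ)) (s n))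
    (halt : ∀ (i : ℕ) (h : i + 1 < N), m ⟨i + 1, h⟩ ≠ m ⟨i, by omega⟩) {n : ℕ} (hn : n < N) :
    HasWSRows (cascadeE m s (n + 1)) ∧
      scal (cascadeE m s (n + 1)) (1 - m ⟨n, hn⟩) = scal (cascadeE m s n) (1 - m ⟨n, hn⟩) ∧
      srad (scal (cascadeE m s (n + 1)) (m ⟨n, hn⟩)) =
        srad (scal (cascadeE m s (n + 1)) (1 - m ⟨n, hn⟩)) + 2 * srad (s ⟨n, hn⟩) - 1 := by
  obtain ⟨hE, hle⟩ := hasWSRows_cascadeE_and_srad_le hs0 hs halt n hn.le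
  rw [cascadeE_succ hn]
  exact hE.liftMat_mul (hs0 _) (hs _) (hle hn)

end Cascade

/-- cf. Brislawn, GLS-II, Lemma 5.  Support intervals and radii
of the intermediate scalar filters of an irreducible cascade of WS lifting
matrices: `suppint(E⁽ⁿ⁾_i) = [-r⁽ⁿ⁾_i - i, r⁽ⁿ⁾_i - i]`, with
`r⁽ⁿ⁾_{m_n} = r⁽ⁿ⁾_{1-m_n} + 2t⁽ⁿ⁾ - 1` (n ≥ 0),
`r⁽ⁿ⁾_{1-m_n} = r⁽ⁿ⁻¹⁾_{m_n} + 2t⁽ⁿ⁻¹⁾ - 1` (n ≥ 1), and `r⁽⁰⁾_{1-m₀} = 0`. -/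
theorem stmt11 (N : ℕ) (s : Fin N → R2) (m : Fin N → Fin 2) (SS : Fin N → M2)
    (hs0 : ∀ n, s n ≠ 0)
    (hSS : ∀ n, (m n = 0 → SS n = umat (s n)) ∧ (m n = 1 → SS n = lmat (s n)))
    (hsym : ∀ n, (m n = 0 → σ (s n) = T 1 * s n) ∧ (m n = 1 → σ (s n) = T (-1) * s n))
    (halt : ∀ (i : ℕ) (h : i + 1 < N), m ⟨i + 1, h⟩ ≠ m ⟨i, by omega⟩) :
    ∀ (n : ℕ) (hn : n < N),
      1 ≤ srad (s ⟨n, hn⟩) ∧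
      (∀ i : Fin 2,
        sint (scal (partialE SS 1 (n + 1)) i) =
          Set.Icc (-(srad (scal (partialE SS 1 (n + 1)) i)) - (i : ℤ))
                  (srad (scal (partialE SS 1 (n + 1)) i) - (i : ℤ))) ∧
      srad (scal (partialE SS 1 (n + 1)) (m ⟨n, hn⟩)) =
        srad (scal (partialE SS 1 (n + 1)) (1 - m ⟨n, hn⟩))
          + 2 * srad (s ⟨n, hn⟩) - 1 ∧
      (1 ≤ n →
        srad (scal (partialE SS 1 (n + 1)) (1 - m ⟨n, hn⟩)) =
          srad (scal (partialE SS 1 n) (m ⟨n, hn⟩))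
            + 2 * srad (s ⟨n - 1, by omega⟩) - 1) ∧
      (n = 0 → srad (scal (partialE SS 1 (n + 1)) (1 - m ⟨n, hn⟩)) = 0) := by
  obtain rfl : SS = fun k => liftMat (m k) (s k) := funext fun k => eq_liftMat_of_cases (hSS k)
  have hs : ∀ k, IsSymmetric (1 - 2 * (m k : ℤ)) (s k) := fun k => isSymmetric_of_cases (hsym k)
  intro n hn
  obtain ⟨hE, hrow, hrad⟩ := hasWSRows_cascadeE_succ_and_srad_eq hs0 hs halt hn
  refine ⟨(hs _).one_le_srad (hs0 _), hE.sint_eq, hrad, fun h1 => ?_, fun h0 => ?_⟩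
  · obtain ⟨k, rfl⟩ : ∃ k, n = k + 1 := ⟨n - 1, by omega⟩
    obtain ⟨-, -, hrad'⟩ := hasWSRows_cascadeE_succ_and_srad_eq hs0 hs halt (Nat.lt_of_succ_lt hn)
    change srad (scal (cascadeE m s (k + 2)) _) =
      srad (scal (cascadeE m s (k + 1)) _) + 2 * srad (s ⟨k, _⟩) - 1
    rw [hrow, fin_two_eq_one_sub_of_ne (halt k hn), sub_sub_cancel]
    exact hrad'
  · subst h0
    change srad (scal (cascadeE m s 1) _) = 0
    rw [hrow, cascadeE, partialE, hasWSRows_one.srad_eq, maxExp_scal_one, sub_self]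
end
end
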